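/- Let G, H, K be finite groups, X' ≤ X ≤ G×H and Y ≤ H×K subgroups, M' a left 𝕜X'-module and N a left 𝕜Y-module. There is a 𝕜[X*Y]-module homomorphism α₁ : Ind_{X'*Y}^{X*Y}(M' ⊗^{X',Y}_{𝕜H} N) → Ind_{X'}^{X}(M') ⊗^{X,Y}_{𝕜H} N sending (g,k)⊗(m'⊗n) to ((g,h)⊗m') ⊗ (h,k)n, for (g,k) ∈ X*Y, m' ∈ M', n ∈ N, where h ∈ H is chosen with (g,h) ∈ X and (h,k) ∈ Y; α₁ is natural in M' and N, and if p₂(X) ≤ p₁(Y) then α₁ is an isomorphism. -/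

import Mathlib

/-! `α₁` comes from the universal property of induction (Frobenius reciprocity), applied to the
`𝕜[X'*Y]`-linear map `m' ⊗ n ↦ (1 ⊗ m') ⊗ n` into `Ind_{X'}^{X}(M') ⊗^{X,Y}_{𝕜H} N`.

If `p₂(X) ≤ p₁(Y)`, every `x = (g,h) ∈ X` has a partner `y = (h,k) ∈ Y`, and
`(x ⊗ m') ⊗ n ↦ (g,k) ⊗ (m' ⊗ y⁻¹n)` inverts `α₁`. Moving `(1, k⁻¹k') ∈ X'*Y` across the induction
tensor shows that this value does not depend on the choice of `y`; this independence is what makes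
the formula compatible with the relations of both `Ind_{X'}^{X}` and `⊗^{X,Y}_{𝕜H}`. -/

namespace Stmt9

/-- `k₁(X) = {g ∈ G ∣ (g,1) ∈ X}`. -/
def k1 {G H : Type*} [Group G] [Group H] (X : Subgroup (G × H)) : Subgroup G :=
  X.comap (MonoidHom.inl G H)

/-- `k₂(X) = {h ∈ H ∣ (1,h) ∈ X}`. -/
def k2 {G H : Type*} [Group G] [Group H] (X : Subgroup (G × H)) : Subgroup H :=
  X.comap (MonoidHom.inr G H)

/-- `p₁(X)`, the image of `X` under the first projection. -/
def p1 {G H : Type*} [Group G] [Group H] (X : Subgroup (G × H)) : Subgroup G :=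
  X.map (MonoidHom.fst G H)

/-- `p₂(X)`, the image of `X` under the second projection. -/
def p2 {G H : Type*} [Group G] [Group H] (X : Subgroup (G × H)) : Subgroup H :=
  X.map (MonoidHom.snd G H)

/-- The opposite subgroup `X° = {(h,g) ∣ (g,h) ∈ X}`. -/
def opp {G H : Type*} [Group G] [Group H] (X : Subgroup (G × H)) : Subgroup (H × G) :=
  X.map ((MulEquiv.prodComm : (G × H) ≃* (H × G)).toMonoidHom)

/-- The composition `X*Y` of subgroup correspondences. -/
def comp {G H K : Type*} [Group G] [Group H] [Group K]
    (X : Subgroup (G × H)) (Y : Subgroup (H × K)) : Subgroup (G × K) where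
  carrier := {gk | ∃ h : H, (gk.1, h) ∈ X ∧ (h, gk.2) ∈ Y}
  one_mem' := ⟨1, X.one_mem, Y.one_mem⟩
  mul_mem' := by
    rintro ⟨g, k⟩ ⟨g', k'⟩ ⟨h, hX, hY⟩ ⟨h', hX', hY'⟩
    exact ⟨h * h', X.mul_mem hX hX', Y.mul_mem hY hY'⟩
  inv_mem' := by
    rintro ⟨g, k⟩ ⟨h, hX, hY⟩
    exact ⟨h⁻¹, X.inv_mem hX, Y.inv_mem hY⟩

lemma mem_comp {G H K : Type*} [Group G] [Group H] [Group K]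
    {X : Subgroup (G × H)} {Y : Subgroup (H × K)} {x : G × K} :
    x ∈ comp X Y ↔ ∃ h : H, (x.1, h) ∈ X ∧ (h, x.2) ∈ Y := Iff.rfl

lemma mem_opp {G H : Type*} [Group G] [Group H] {X : Subgroup (G × H)} {x : H × G} :
    x ∈ opp X ↔ (x.2, x.1) ∈ X := by
  rw [opp, Subgroup.mem_map]
  constructor
  · rintro ⟨⟨g, h⟩, hgh, rfl⟩
    simpa using hgh
  · intro hx
    exact ⟨(x.2, x.1), hx, rfl⟩

/-- The diagonal subgroup `Δ(P) = {(g,g) ∣ g ∈ P} ≤ G × G`. -/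
def diag {G : Type*} [Group G] (P : Subgroup G) : Subgroup (G × G) :=
  (P.subtype.prod P.subtype).range

/-- The twisted diagonal subgroup `Δ(P,φ,Q) = {(φ y, y) ∣ y ∈ Q} ≤ G × H`. -/
def tdiag {G H : Type*} [Group G] [Group H] (P : Subgroup G) (Q : Subgroup H)
    (φ : Q ≃* P) : Subgroup (G × H) :=
  ((P.subtype.comp φ.toMonoidHom).prod Q.subtype).range

open scoped TensorProduct

section ExtendedTensor

variable {𝕜 : Type*} [CommRing 𝕜]

/-- The submodule of relations defining the balanced tensor product
`M ⊗_{𝕜[k₂(X)∩k₁(Y)]} N` over the middle group: it is spanned by the elements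
`(m·b) ⊗ n - m ⊗ (b·n)` with `b ∈ k₂(X)∩k₁(Y)`, where `m·b = (1,b⁻¹)·m` and
`b·n = (b,1)·n`. -/
def midRel {A B C : Type*} [Group A] [Group B] [Group C]
    {M N : Type*} [AddCommGroup M] [Module 𝕜 M] [AddCommGroup N] [Module 𝕜 N]
    (X : Subgroup (A × B)) (Y : Subgroup (B × C))
    (ρ : Representation 𝕜 ↥X M) (σ : Representation 𝕜 ↥Y N) :
    Submodule 𝕜 (M ⊗[𝕜] N) :=
  Submodule.span 𝕜 {z | ∃ (b : B) (h1 : (((1 : A), b⁻¹) : A × B) ∈ X)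
    (h2 : ((b, (1 : C)) : B × C) ∈ Y) (m : M) (n : N),
      z = (ρ ⟨((1 : A), b⁻¹), h1⟩ m) ⊗ₜ[𝕜] n - m ⊗ₜ[𝕜] (σ ⟨(b, (1 : C)), h2⟩ n)}

/-- The underlying `𝕜`-module of the extended tensor product `M ⊗^{X,Y}_{𝕜B} N`. -/
abbrev ExtTen {A B C : Type*} [Group A] [Group B] [Group C]
    {M N : Type*} [AddCommGroup M] [Module 𝕜 M] [AddCommGroup N] [Module 𝕜 N]
    (X : Subgroup (A × B)) (Y : Subgroup (B × C))
    (ρ : Representation 𝕜 ↥X M) (σ : Representation 𝕜 ↥Y N) :=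
  (M ⊗[𝕜] N) ⧸ midRel X Y ρ σ

/-- The canonical projection onto the extended tensor product. -/
def extMk {A B C : Type*} [Group A] [Group B] [Group C]
    {M N : Type*} [AddCommGroup M] [Module 𝕜 M] [AddCommGroup N] [Module 𝕜 N]
    (X : Subgroup (A × B)) (Y : Subgroup (B × C))
    (ρ : Representation 𝕜 ↥X M) (σ : Representation 𝕜 ↥Y N) :
    (M ⊗[𝕜] N) →ₗ[𝕜] ExtTen X Y ρ σ :=
  (midRel X Y ρ σ).mkQ

/-- The `𝕜`-module `LHom^{X,Y}_{𝕜A}(M,N) = Hom_{𝕜[k₁(X)∩k₁(Y)]}(M,N)` of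
`𝕜`-linear maps commuting with the actions of `k₁(X)∩k₁(Y)` (via `(a,1)`). -/
def lHomSub {A B C : Type*} [Group A] [Group B] [Group C]
    {M N : Type*} [AddCommGroup M] [Module 𝕜 M] [AddCommGroup N] [Module 𝕜 N]
    (X : Subgroup (A × B)) (Y : Subgroup (A × C))
    (ρ : Representation 𝕜 ↥X M) (σ : Representation 𝕜 ↥Y N) :
    Submodule 𝕜 (M →ₗ[𝕜] N) where
  carrier := {f | ∀ (a : A) (h1 : ((a, (1 : B)) : A × B) ∈ X)
      (h2 : ((a, (1 : C)) : A × C) ∈ Y) (m : M),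
        f (ρ ⟨(a, 1), h1⟩ m) = σ ⟨(a, 1), h2⟩ (f m)}
  add_mem' := by
    intro f g hf hg a h1 h2 m
    simp only [LinearMap.add_apply, hf a h1 h2 m, hg a h1 h2 m, map_add]
  zero_mem' := by
    intro a h1 h2 m
    simp
  smul_mem' := by
    intro c f hf a h1 h2 m
    simp only [LinearMap.smul_apply, hf a h1 h2 m, map_smul]

/-- The `𝕜`-module `RHom^{X,Y}_{𝕜A}(M,N) = Hom_{𝕜[k₂(X)∩k₂(Y)]}(M,N)` of
`𝕜`-linear maps commuting with the actions of `k₂(X)∩k₂(Y)` (via `(1,a)`). -/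
def rHomSub {A B C : Type*} [Group A] [Group B] [Group C]
    {M N : Type*} [AddCommGroup M] [Module 𝕜 M] [AddCommGroup N] [Module 𝕜 N]
    (X : Subgroup (B × A)) (Y : Subgroup (C × A))
    (ρ : Representation 𝕜 ↥X M) (σ : Representation 𝕜 ↥Y N) :
    Submodule 𝕜 (M →ₗ[𝕜] N) where
  carrier := {f | ∀ (a : A) (h1 : (((1 : B), a) : B × A) ∈ X)
      (h2 : (((1 : C), a) : C × A) ∈ Y) (m : M),
        f (ρ ⟨(1, a), h1⟩ m) = σ ⟨(1, a), h2⟩ (f m)}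
  add_mem' := by
    intro f g hf hg a h1 h2 m
    simp only [LinearMap.add_apply, hf a h1 h2 m, hg a h1 h2 m, map_add]
  zero_mem' := by
    intro a h1 h2 m
    simp
  smul_mem' := by
    intro c f hf a h1 h2 m
    simp only [LinearMap.smul_apply, hf a h1 h2 m, map_smul]

/-- The `𝕜`-module of `𝕜I`-linear maps between two representations of a group
`I`, e.g. `Hom_{𝕜[X*X°]}(-,-)` or `Hom_{𝕜X}(-,-)`. -/
def fullHomSub {I : Type*} [Group I]
    {M N : Type*} [AddCommGroup M] [Module 𝕜 M] [AddCommGroup N] [Module 𝕜 N]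
    (ρ : Representation 𝕜 I M) (σ : Representation 𝕜 I N) :
    Submodule 𝕜 (M →ₗ[𝕜] N) where
  carrier := {f | ∀ (x : I) (m : M), f (ρ x m) = σ x (f m)}
  add_mem' := by
    intro f g hf hg x m
    simp only [LinearMap.add_apply, hf x m, hg x m, map_add]
  zero_mem' := by
    intro x m
    simp
  smul_mem' := by
    intro c f hf x m
    simp only [LinearMap.smul_apply, hf x m, map_smul]

/-- Relations defining the induced module `Ind_{X'}^{X}(M') = 𝕜X ⊗_{𝕜X'} M'`:
spanned by `(b·a) ⊗ m - b ⊗ (a·m)` for `a ∈ X'`, `b ∈ X`. -/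
noncomputable def indRel {I : Type*} [Group I] (X' X : Subgroup I)
    {M' : Type*} [AddCommGroup M'] [Module 𝕜 M']
    (ρ' : Representation 𝕜 ↥X' M') :
    Submodule 𝕜 (MonoidAlgebra 𝕜 ↥X ⊗[𝕜] M') :=
  Submodule.span 𝕜 {z | ∃ (b : ↥X) (a : I) (h1 : a ∈ X') (h2 : a ∈ X) (m : M'),
    z = (MonoidAlgebra.single (b * ⟨a, h2⟩) (1 : 𝕜)) ⊗ₜ[𝕜] m -
        (MonoidAlgebra.single b (1 : 𝕜)) ⊗ₜ[𝕜] (ρ' ⟨a, h1⟩ m)}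

/-- The underlying `𝕜`-module of the induced module `Ind_{X'}^{X}(M')`. -/
abbrev Ind {I : Type*} [Group I] (X' X : Subgroup I)
    {M' : Type*} [AddCommGroup M'] [Module 𝕜 M']
    (ρ' : Representation 𝕜 ↥X' M') :=
  (MonoidAlgebra 𝕜 ↥X ⊗[𝕜] M') ⧸ indRel X' X ρ'

/-- The canonical projection onto the induced module. -/
noncomputable def indMk {I : Type*} [Group I] (X' X : Subgroup I)
    {M' : Type*} [AddCommGroup M'] [Module 𝕜 M']
    (ρ' : Representation 𝕜 ↥X' M') :
    (MonoidAlgebra 𝕜 ↥X ⊗[𝕜] M') →ₗ[𝕜] Ind X' X ρ' :=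
  (indRel X' X ρ').mkQ

end ExtendedTensor

section Homs

variable {G H : Type*} [Group G] [Group H]

lemma k1_prod_mem {X : Subgroup (G × H)} (u : ↥(k1 X)) :
    (((u : G), (1 : H)) : G × H) ∈ X := u.2

lemma k1_inv_prod_mem {X : Subgroup (G × H)} (u : ↥(k1 X)) :
    (((u : G)⁻¹, (1 : H)) : G × H) ∈ X := by
  simpa using X.inv_mem (k1_prod_mem u)

lemma k2_prod_mem {X : Subgroup (G × H)} (u : ↥(k2 X)) :
    (((1 : G), (u : H)) : G × H) ∈ X := u.2

/-- The embedding `k₁(X) →* X`, `u ↦ (u,1)`. -/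
def k1Hom (X : Subgroup (G × H)) : ↥(k1 X) →* ↥X where
  toFun u := ⟨((u : G), (1 : H)), u.2⟩
  map_one' := rfl
  map_mul' u v := Subtype.ext (by simp)

/-- The embedding `k₁(X) →* X°`, `u ↦ (1,u)`, giving the right `𝕜[k₁(X)]`-module
structure (read as a left module) on left `𝕜X°`-modules. -/
def k1HomOp (X : Subgroup (G × H)) : ↥(k1 X) →* ↥(opp X) where
  toFun u := ⟨((1 : H), (u : G)), mem_opp.mpr u.2⟩
  map_one' := rfl
  map_mul' u v := Subtype.ext (by simp)

/-- The embedding `k₂(X) →* X`, `u ↦ (1,u)`. -/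
def k2Hom (X : Subgroup (G × H)) : ↥(k2 X) →* ↥X where
  toFun u := ⟨((1 : G), (u : H)), u.2⟩
  map_one' := rfl
  map_mul' u v := Subtype.ext (by simp)

end Homs

section Induction

variable {𝕜 : Type*} [CommRing 𝕜] {I : Type*} [Group I] {X' X : Subgroup I}
  {M' : Type*} [AddCommGroup M'] [Module 𝕜 M'] {ρ' : Representation 𝕜 ↥X' M'}
  {P : Type*} [AddCommGroup P] [Module 𝕜 P]

def IsIndAction (ρI : Representation 𝕜 ↥X (Ind X' X ρ')) : Prop :=
  ∀ (x b : ↥X) (m : M'),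
    ρI x (indMk X' X ρ' ((MonoidAlgebra.single b (1 : 𝕜)) ⊗ₜ[𝕜] m)) =
      indMk X' X ρ' ((MonoidAlgebra.single (x * b) (1 : 𝕜)) ⊗ₜ[𝕜] m)

variable (X' X ρ') in
noncomputable def Ind.single (b : ↥X) : M' →ₗ[𝕜] Ind X' X ρ' :=
  indMk X' X ρ' ∘ₗ TensorProduct.mk 𝕜 _ M' (MonoidAlgebra.single b 1)

lemma Ind.single_apply (b : ↥X) (m : M') :
    Ind.single X' X ρ' b m = indMk X' X ρ' (MonoidAlgebra.single b (1 : 𝕜) ⊗ₜ[𝕜] m) :=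
  rfl

lemma Ind.single_mul (b : ↥X) (a : I) (h1 : a ∈ X') (h2 : a ∈ X) (m : M') :
    Ind.single X' X ρ' (b * ⟨a, h2⟩) m = Ind.single X' X ρ' b (ρ' ⟨a, h1⟩ m) := by
  rw [Ind.single_apply, Ind.single_apply, indMk, Submodule.mkQ_apply, Submodule.mkQ_apply,
    Submodule.Quotient.eq]
  exact Submodule.subset_span ⟨b, a, h1, h2, m, rfl⟩

lemma Ind.hom_ext {F F' : Ind X' X ρ' →ₗ[𝕜] P}
    (h : ∀ b : ↥X, F ∘ₗ Ind.single X' X ρ' b = F' ∘ₗ Ind.single X' X ρ' b) : F = F' :=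
  Submodule.linearMap_qext _ <| TensorProduct.ext <| MonoidAlgebra.lhom_ext' fun b =>
    LinearMap.ext_ring <| h b

noncomputable def Ind.lift (F : ↥X → M' →ₗ[𝕜] P)
    (hF : ∀ (b : ↥X) (a : I) (h1 : a ∈ X') (h2 : a ∈ X) (m : M'),
      F (b * ⟨a, h2⟩) m = F b (ρ' ⟨a, h1⟩ m)) :
    Ind X' X ρ' →ₗ[𝕜] P :=
  (indRel X' X ρ').liftQ (TensorProduct.lift ((MonoidAlgebra.basis ↥X 𝕜).constr 𝕜 F)) <| by
    rw [indRel, Submodule.span_le]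
    rintro _ ⟨b, a, h1, h2, m, rfl⟩
    simp [← MonoidAlgebra.basis_apply, hF b a h1 h2 m]

@[simp]
lemma Ind.lift_single (F : ↥X → M' →ₗ[𝕜] P)
    (hF : ∀ (b : ↥X) (a : I) (h1 : a ∈ X') (h2 : a ∈ X) (m : M'),
      F (b * ⟨a, h2⟩) m = F b (ρ' ⟨a, h1⟩ m)) (b : ↥X) (m : M') :
    Ind.lift F hF (Ind.single X' X ρ' b m) = F b m := by
  simp [Ind.lift, Ind.single, indMk, ← MonoidAlgebra.basis_apply]

noncomputable def Ind.liftEquivariant (ρP : Representation 𝕜 ↥X P) (f : M' →ₗ[𝕜] P)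
    (hf : ∀ (a : I) (h1 : a ∈ X') (h2 : a ∈ X) (m : M'), f (ρ' ⟨a, h1⟩ m) = ρP ⟨a, h2⟩ (f m)) :
    Ind X' X ρ' →ₗ[𝕜] P :=
  Ind.lift (fun b => ρP b ∘ₗ f) fun b a h1 h2 m => by simp [hf a h1 h2]

@[simp]
lemma Ind.liftEquivariant_single (ρP : Representation 𝕜 ↥X P) (f : M' →ₗ[𝕜] P)
    (hf : ∀ (a : I) (h1 : a ∈ X') (h2 : a ∈ X) (m : M'), f (ρ' ⟨a, h1⟩ m) = ρP ⟨a, h2⟩ (f m))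
    (b : ↥X) (m : M') :
    Ind.liftEquivariant ρP f hf (Ind.single X' X ρ' b m) = ρP b (f m) :=
  Ind.lift_single _ _ b m

lemma Ind.liftEquivariant_rep (ρP : Representation 𝕜 ↥X P) (f : M' →ₗ[𝕜] P)
    (hf : ∀ (a : I) (h1 : a ∈ X') (h2 : a ∈ X) (m : M'), f (ρ' ⟨a, h1⟩ m) = ρP ⟨a, h2⟩ (f m))
    {ρI : Representation 𝕜 ↥X (Ind X' X ρ')} (hρI : IsIndAction ρI)
    (x : ↥X) (u : Ind X' X ρ') :
    Ind.liftEquivariant ρP f hf (ρI x u) = ρP x (Ind.liftEquivariant ρP f hf u) := by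
  suffices Ind.liftEquivariant ρP f hf ∘ₗ ρI x = ρP x ∘ₗ Ind.liftEquivariant ρP f hf from
    LinearMap.congr_fun this u
  refine Ind.hom_ext fun b => LinearMap.ext fun m => ?_
  simp only [LinearMap.comp_apply]
  rw [Ind.single_apply, hρI, ← Ind.single_apply, ← Ind.single_apply, Ind.liftEquivariant_single,
    Ind.liftEquivariant_single, map_mul, Module.End.mul_apply]

lemma Ind.single_one_rep (hXX : X' ≤ X) {ρI : Representation 𝕜 ↥X (Ind X' X ρ')}
    (hρI : IsIndAction ρI) (a : I) (h : a ∈ X') (m : M') :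
    Ind.single X' X ρ' 1 (ρ' ⟨a, h⟩ m) = ρI ⟨a, hXX h⟩ (Ind.single X' X ρ' 1 m) := by
  rw [← Ind.single_mul 1 a h (hXX h), Ind.single_apply, Ind.single_apply, hρI, one_mul, mul_one]

end Induction

section ExtendedTensorMaps

variable {𝕜 : Type*} [CommRing 𝕜] {A B C : Type*} [Group A] [Group B] [Group C]
  {X : Subgroup (A × B)} {Y : Subgroup (B × C)}
  {M N : Type*} [AddCommGroup M] [Module 𝕜 M] [AddCommGroup N] [Module 𝕜 N]
  {ρ : Representation 𝕜 ↥X M} {σ : Representation 𝕜 ↥Y N}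
  {P : Type*} [AddCommGroup P] [Module 𝕜 P]

def IsExtTenAction (ρT : Representation 𝕜 ↥(comp X Y) (ExtTen X Y ρ σ)) : Prop :=
  ∀ (g : A) (k : C) (hgk : (g, k) ∈ comp X Y) (h : B) (h1 : (g, h) ∈ X) (h2 : (h, k) ∈ Y)
    (m : M) (n : N),
    ρT ⟨(g, k), hgk⟩ (extMk X Y ρ σ (m ⊗ₜ[𝕜] n)) =
      extMk X Y ρ σ ((ρ ⟨(g, h), h1⟩ m) ⊗ₜ[𝕜] (σ ⟨(h, k), h2⟩ n))

lemma extMk_rep_tmul (b : B) (h1 : (((1 : A), b⁻¹) : A × B) ∈ X)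
    (h2 : ((b, (1 : C)) : B × C) ∈ Y) (m : M) (n : N) :
    extMk X Y ρ σ (ρ ⟨(1, b⁻¹), h1⟩ m ⊗ₜ[𝕜] n) = extMk X Y ρ σ (m ⊗ₜ[𝕜] σ ⟨(b, 1), h2⟩ n) := by
  rw [extMk, Submodule.mkQ_apply, Submodule.mkQ_apply, Submodule.Quotient.eq]
  exact Submodule.subset_span ⟨b, h1, h2, m, n, rfl⟩

lemma ExtTen.hom_ext {F F' : ExtTen X Y ρ σ →ₗ[𝕜] P}
    (h : F ∘ₗ extMk X Y ρ σ = F' ∘ₗ extMk X Y ρ σ) : F = F' :=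
  Submodule.linearMap_qext _ h

noncomputable def ExtTen.lift (f : M →ₗ[𝕜] N →ₗ[𝕜] P)
    (hf : ∀ (b : B) (h1 : (((1 : A), b⁻¹) : A × B) ∈ X) (h2 : ((b, (1 : C)) : B × C) ∈ Y)
      (m : M) (n : N), f (ρ ⟨(1, b⁻¹), h1⟩ m) n = f m (σ ⟨(b, 1), h2⟩ n)) :
    ExtTen X Y ρ σ →ₗ[𝕜] P :=
  (midRel X Y ρ σ).liftQ (TensorProduct.lift f) <| by
    rw [midRel, Submodule.span_le]
    rintro _ ⟨b, h1, h2, m, n, rfl⟩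
    simp [hf b h1 h2 m n]

@[simp]
lemma ExtTen.lift_extMk (f : M →ₗ[𝕜] N →ₗ[𝕜] P)
    (hf : ∀ (b : B) (h1 : (((1 : A), b⁻¹) : A × B) ∈ X) (h2 : ((b, (1 : C)) : B × C) ∈ Y)
      (m : M) (n : N), f (ρ ⟨(1, b⁻¹), h1⟩ m) n = f m (σ ⟨(b, 1), h2⟩ n)) (m : M) (n : N) :
    ExtTen.lift f hf (extMk X Y ρ σ (m ⊗ₜ[𝕜] n)) = f m n := by
  simp [ExtTen.lift, extMk]

variable {X' : Subgroup (A × B)} {M' : Type*} [AddCommGroup M'] [Module 𝕜 M']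
  {ρ' : Representation 𝕜 ↥X' M'}

noncomputable def ExtTen.map (hXX : X' ≤ X) (f : M' →ₗ[𝕜] M)
    (hf : ∀ (a : A × B) (h : a ∈ X') (m : M'), f (ρ' ⟨a, h⟩ m) = ρ ⟨a, hXX h⟩ (f m)) :
    ExtTen X' Y ρ' σ →ₗ[𝕜] ExtTen X Y ρ σ :=
  ExtTen.lift ((TensorProduct.mk 𝕜 M N).compr₂ (extMk X Y ρ σ) ∘ₗ f) fun b h1 h2 m n => by
    simp only [LinearMap.comp_apply, LinearMap.compr₂_apply, TensorProduct.mk_apply, hf]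
    exact extMk_rep_tmul b (hXX h1) h2 (f m) n

@[simp]
lemma ExtTen.map_extMk (hXX : X' ≤ X) (f : M' →ₗ[𝕜] M)
    (hf : ∀ (a : A × B) (h : a ∈ X') (m : M'), f (ρ' ⟨a, h⟩ m) = ρ ⟨a, hXX h⟩ (f m))
    (m : M') (n : N) :
    ExtTen.map hXX f hf (extMk X' Y ρ' σ (m ⊗ₜ[𝕜] n)) = extMk X Y ρ σ (f m ⊗ₜ[𝕜] n) :=
  ExtTen.lift_extMk _ _ m n

lemma ExtTen.map_rep (hXX : X' ≤ X) (f : M' →ₗ[𝕜] M)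
    (hf : ∀ (a : A × B) (h : a ∈ X') (m : M'), f (ρ' ⟨a, h⟩ m) = ρ ⟨a, hXX h⟩ (f m))
    {ρT₁ : Representation 𝕜 ↥(comp X' Y) (ExtTen X' Y ρ' σ)} (hρT₁ : IsExtTenAction ρT₁)
    {ρT₂ : Representation 𝕜 ↥(comp X Y) (ExtTen X Y ρ σ)} (hρT₂ : IsExtTenAction ρT₂)
    (c : A × C) (hc' : c ∈ comp X' Y) (hc : c ∈ comp X Y) (t : ExtTen X' Y ρ' σ) :
    ExtTen.map hXX f hf (ρT₁ ⟨c, hc'⟩ t) = ρT₂ ⟨c, hc⟩ (ExtTen.map hXX f hf t) := by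
  obtain ⟨g, k⟩ := c
  obtain ⟨h, h1, h2⟩ := id hc'
  suffices ExtTen.map hXX f hf ∘ₗ ρT₁ ⟨(g, k), hc'⟩ = ρT₂ ⟨(g, k), hc⟩ ∘ₗ ExtTen.map hXX f hf from
    LinearMap.congr_fun this t
  refine ExtTen.hom_ext (TensorProduct.ext' fun m n => ?_)
  simp only [LinearMap.comp_apply]
  rw [hρT₁ g k hc' h h1 h2, ExtTen.map_extMk, ExtTen.map_extMk, hρT₂ g k hc h (hXX h1) h2, hf]

end ExtendedTensorMaps

section Alpha

variable {𝕜 : Type*} [CommRing 𝕜] {G H K : Type*} [Group G] [Group H] [Group K]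
  {X' X : Subgroup (G × H)} {Y : Subgroup (H × K)}
  {M' N : Type*} [AddCommGroup M'] [Module 𝕜 M'] [AddCommGroup N] [Module 𝕜 N]
  {ρM' : Representation 𝕜 ↥X' M'} {ρN : Representation 𝕜 ↥Y N}
  {ρT₁ : Representation 𝕜 ↥(comp X' Y) (ExtTen X' Y ρM' ρN)}
  {ρI : Representation 𝕜 ↥X (Ind X' X ρM')} {ρT₂ : Representation 𝕜 ↥(comp X Y) (ExtTen X Y ρI ρN)}

noncomputable def alpha (hX'X : X' ≤ X) (hρT₁ : IsExtTenAction ρT₁) (hρI : IsIndAction ρI)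
    (hρT₂ : IsExtTenAction ρT₂) : Ind (comp X' Y) (comp X Y) ρT₁ →ₗ[𝕜] ExtTen X Y ρI ρN :=
  Ind.liftEquivariant ρT₂
    (ExtTen.map hX'X (Ind.single X' X ρM' 1) (Ind.single_one_rep hX'X hρI))
    (ExtTen.map_rep hX'X _ _ hρT₁ hρT₂)

lemma alpha_single (hX'X : X' ≤ X) (hρT₁ : IsExtTenAction ρT₁) (hρI : IsIndAction ρI)
    (hρT₂ : IsExtTenAction ρT₂) (g : G) (k : K) (hgk : (g, k) ∈ comp X Y) (h : H)
    (h1 : (g, h) ∈ X) (h2 : (h, k) ∈ Y) (m : M') (n : N) :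
    alpha hX'X hρT₁ hρI hρT₂
        (Ind.single _ _ ρT₁ ⟨(g, k), hgk⟩ (extMk X' Y ρM' ρN (m ⊗ₜ[𝕜] n))) =
      extMk X Y ρI ρN (Ind.single X' X ρM' ⟨(g, h), h1⟩ m ⊗ₜ[𝕜] ρN ⟨(h, k), h2⟩ n) := by
  rw [alpha, Ind.liftEquivariant_single, ExtTen.map_extMk, hρT₂ g k hgk h h1 h2,
    Ind.single_apply, hρI, mul_one, ← Ind.single_apply]

lemma alpha_rep (hX'X : X' ≤ X) (hρT₁ : IsExtTenAction ρT₁) (hρI : IsIndAction ρI)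
    (hρT₂ : IsExtTenAction ρT₂)
    {ρS : Representation 𝕜 ↥(comp X Y) (Ind (comp X' Y) (comp X Y) ρT₁)} (hρS : IsIndAction ρS)
    (x : ↥(comp X Y)) (u : Ind (comp X' Y) (comp X Y) ρT₁) :
    alpha hX'X hρT₁ hρI hρT₂ (ρS x u) = ρT₂ x (alpha hX'X hρT₁ hρI hρT₂ u) :=
  Ind.liftEquivariant_rep _ _ _ hρS x u

lemma mk_mem_comp (x : ↥X) (y : ↥Y) (hxy : (x : G × H).2 = (y : H × K).1) :
    ((x : G × H).1, (y : H × K).2) ∈ comp X Y :=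
  ⟨_, x.2, hxy ▸ y.2⟩

variable (ρT₁) in
noncomputable def alphaInvGen (x : ↥X) (y : ↥Y) (hxy : (x : G × H).2 = (y : H × K).1) :
    M' →ₗ[𝕜] N →ₗ[𝕜] Ind (comp X' Y) (comp X Y) ρT₁ :=
  ((TensorProduct.mk 𝕜 M' N).compl₂ (ρN y⁻¹)).compr₂
    (Ind.single _ _ ρT₁ ⟨_, mk_mem_comp x y hxy⟩ ∘ₗ extMk X' Y ρM' ρN)

lemma alphaInvGen_apply (x : ↥X) (y : ↥Y) (hxy : (x : G × H).2 = (y : H × K).1) (m : M')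
    (n : N) :
    alphaInvGen ρT₁ x y hxy m n =
      Ind.single _ _ ρT₁ ⟨_, mk_mem_comp x y hxy⟩ (extMk X' Y ρM' ρN (m ⊗ₜ[𝕜] ρN y⁻¹ n)) :=
  rfl

lemma alphaInvGen_mul (hX'X : X' ≤ X) (hρT₁ : IsExtTenAction ρT₁) {x x' : ↥X} {y y' : ↥Y}
    (hxy : (x : G × H).2 = (y : H × K).1) (hx'y' : (x' : G × H).2 = (y' : H × K).1)
    (a : ↥X') (b : ↥Y) (hab : (a : G × H).2 = (b : H × K).1) (hx : (x' : G × H) = x * a)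
    (hy : y' = y * b) (m : M') (n : N) :
    alphaInvGen ρT₁ x' y' hx'y' m n = alphaInvGen ρT₁ x y hxy (ρM' a m) n := by
  have hbY : ((a : G × H).2, (b : H × K).2) ∈ Y := hab ▸ b.2
  have hc' : ((a : G × H).1, (b : H × K).2) ∈ comp X' Y := ⟨_, a.2, hbY⟩
  have hc : ((a : G × H).1, (b : H × K).2) ∈ comp X Y := ⟨_, hX'X a.2, hbY⟩
  have hs : (⟨_, mk_mem_comp x' y' hx'y'⟩ : ↥(comp X Y)) = ⟨_, mk_mem_comp x y hxy⟩ * ⟨_, hc⟩ :=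
    Subtype.ext (by simp [hx, hy])
  have hb : (⟨_, hbY⟩ : ↥Y) = b := Subtype.ext (Prod.ext hab rfl)
  rw [alphaInvGen_apply, alphaInvGen_apply, hs, Ind.single_mul _ _ hc' hc,
    hρT₁ _ _ hc' _ a.2 hbY, ← Module.End.mul_apply, ← map_mul, hb, hy, mul_inv_rev,
    mul_inv_cancel_left]

lemma alphaInvGen_indep (hX'X : X' ≤ X) (hρT₁ : IsExtTenAction ρT₁) {x : ↥X} {y y' : ↥Y}
    (hxy : (x : G × H).2 = (y : H × K).1) (hxy' : (x : G × H).2 = (y' : H × K).1)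
    (m : M') (n : N) :
    alphaInvGen ρT₁ x y' hxy' m n = alphaInvGen ρT₁ x y hxy m n := by
  rw [alphaInvGen_mul hX'X hρT₁ hxy hxy' 1 (y⁻¹ * y') (by simp [← hxy, ← hxy']) (mul_one _).symm
    (mul_inv_cancel_left y y').symm, map_one, Module.End.one_apply]

lemma alphaInvGen_mul_left {x : ↥X} {y : ↥Y} (hxy : (x : G × H).2 = (y : H × K).1) (z : ↥X)
    (w : ↥Y) (hz : (z : G × H).1 = 1) (hw : (w : H × K).2 = 1)
    (hzwy : (z * x : G × H).2 = (w * y : H × K).1) (m : M') (n : N) :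
    alphaInvGen ρT₁ (z * x) (w * y) hzwy m n = alphaInvGen ρT₁ x y hxy m (ρN w⁻¹ n) := by
  have hs : (⟨_, mk_mem_comp (z * x) (w * y) hzwy⟩ : ↥(comp X Y)) = ⟨_, mk_mem_comp x y hxy⟩ :=
    Subtype.ext (by simp [hz, hw])
  rw [alphaInvGen_apply, alphaInvGen_apply, hs, mul_inv_rev, map_mul, Module.End.mul_apply]

section Inverse

variable (hX'X : X' ≤ X) (hρT₁ : IsExtTenAction ρT₁) (sec : ↥X → ↥Y)
  (hsec : ∀ x : ↥X, (x : G × H).2 = (sec x : H × K).1)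

noncomputable def alphaInvBilin : Ind X' X ρM' →ₗ[𝕜] N →ₗ[𝕜] Ind (comp X' Y) (comp X Y) ρT₁ :=
  Ind.lift (fun x => alphaInvGen ρT₁ x (sec x) (hsec x)) fun b a h1 h2 m =>
    LinearMap.ext fun n => alphaInvGen_mul hX'X hρT₁ (hsec b) (hsec _) ⟨a, h1⟩
      ((sec b)⁻¹ * sec (b * ⟨a, h2⟩)) (by simp [← hsec]) rfl (mul_inv_cancel_left _ _).symm m n

lemma alphaInvBilin_single (x : ↥X) (m : M') (n : N) :
    alphaInvBilin hX'X hρT₁ sec hsec (Ind.single X' X ρM' x m) n =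
      alphaInvGen ρT₁ x (sec x) (hsec x) m n := by
  rw [alphaInvBilin, Ind.lift_single]

lemma alphaInvBilin_balanced (hρI : IsIndAction ρI) (c : H)
    (h1 : (((1 : G), c⁻¹) : G × H) ∈ X) (h2 : ((c, (1 : K)) : H × K) ∈ Y)
    (u : Ind X' X ρM') (n : N) :
    alphaInvBilin hX'X hρT₁ sec hsec (ρI ⟨(1, c⁻¹), h1⟩ u) n =
      alphaInvBilin hX'X hρT₁ sec hsec u (ρN ⟨(c, 1), h2⟩ n) := by
  suffices (alphaInvBilin hX'X hρT₁ sec hsec).flip n ∘ₗ ρI ⟨(1, c⁻¹), h1⟩ =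
      (alphaInvBilin hX'X hρT₁ sec hsec).flip (ρN ⟨(c, 1), h2⟩ n) from LinearMap.congr_fun this u
  refine Ind.hom_ext fun x => LinearMap.ext fun m => ?_
  have hzwy : ((⟨(1, c⁻¹), h1⟩ * x : ↥X) : G × H).2 =
      (((⟨(c, 1), h2⟩ : ↥Y)⁻¹ * sec x : ↥Y) : H × K).1 := by
    simp [← hsec]
  simp only [LinearMap.comp_apply, LinearMap.flip_apply]
  rw [alphaInvBilin_single, Ind.single_apply, hρI, ← Ind.single_apply, alphaInvBilin_single,
    alphaInvGen_indep hX'X hρT₁ hzwy, alphaInvGen_mul_left (hsec x) _ _ rfl (by simp),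
    inv_inv]

noncomputable def alphaInv (hρI : IsIndAction ρI) :
    ExtTen X Y ρI ρN →ₗ[𝕜] Ind (comp X' Y) (comp X Y) ρT₁ :=
  ExtTen.lift (alphaInvBilin hX'X hρT₁ sec hsec) (alphaInvBilin_balanced hX'X hρT₁ sec hsec hρI)

lemma alphaInv_extMk_single (hρI : IsIndAction ρI) (x : ↥X) (m : M') (n : N) :
    alphaInv hX'X hρT₁ sec hsec hρI (extMk X Y ρI ρN (Ind.single X' X ρM' x m ⊗ₜ[𝕜] n)) =
      alphaInvGen ρT₁ x (sec x) (hsec x) m n := by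
  rw [alphaInv, ExtTen.lift_extMk, alphaInvBilin_single]

lemma alphaInv_comp_alpha (hρI : IsIndAction ρI) (hρT₂ : IsExtTenAction ρT₂) :
    alphaInv hX'X hρT₁ sec hsec hρI ∘ₗ alpha hX'X hρT₁ hρI hρT₂ = LinearMap.id := by
  refine Ind.hom_ext fun ⟨(g, k), hgk⟩ => ExtTen.hom_ext (TensorProduct.ext' fun m n => ?_)
  obtain ⟨h, h1, h2⟩ := id hgk
  simp only [LinearMap.comp_apply, LinearMap.id_apply]
  rw [alpha_single hX'X hρT₁ hρI hρT₂ g k hgk h h1 h2, alphaInv_extMk_single,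
    alphaInvGen_indep hX'X hρT₁ (y := ⟨(h, k), h2⟩) rfl, alphaInvGen_apply,
    ← Module.End.mul_apply, ← map_mul, inv_mul_cancel, map_one, Module.End.one_apply]

lemma alpha_comp_alphaInv (hρI : IsIndAction ρI) (hρT₂ : IsExtTenAction ρT₂) :
    alpha hX'X hρT₁ hρI hρT₂ ∘ₗ alphaInv hX'X hρT₁ sec hsec hρI = LinearMap.id := by
  refine ExtTen.hom_ext (TensorProduct.ext (Ind.hom_ext fun x => LinearMap.ext₂ fun m n => ?_))
  have hx : ((x : G × H).2, (sec x : H × K).2) ∈ Y := hsec x ▸ (sec x).2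
  have hy : (⟨_, hx⟩ : ↥Y) = sec x := Subtype.ext (Prod.ext (hsec x) rfl)
  simp only [LinearMap.comp_apply, LinearMap.compr₂ₛₗ_apply, TensorProduct.mk_apply,
    LinearMap.id_apply]
  rw [alphaInv_extMk_single, alphaInvGen_apply, alpha_single hX'X hρT₁ hρI hρT₂ _ _ _ _ x.2 hx,
    hy, ← Module.End.mul_apply, ← map_mul, mul_inv_cancel, map_one, Module.End.one_apply]

end Inverse

lemma exists_snd_eq_fst_of_p2_le_p1 (hp : p2 X ≤ p1 Y) (x : ↥X) :
    ∃ y : ↥Y, (x : G × H).2 = (y : H × K).1 := by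
  obtain ⟨y, hy, hxy⟩ := Subgroup.mem_map.mp (hp (Subgroup.mem_map_of_mem _ x.2))
  exact ⟨⟨y, hy⟩, hxy.symm⟩

theorem alpha_bijective (hX'X : X' ≤ X) (hρT₁ : IsExtTenAction ρT₁) (hρI : IsIndAction ρI)
    (hρT₂ : IsExtTenAction ρT₂) (hp : p2 X ≤ p1 Y) :
    Function.Bijective (alpha hX'X hρT₁ hρI hρT₂) := by
  choose sec hsec using exists_snd_eq_fst_of_p2_le_p1 hp
  exact Function.bijective_iff_has_inverse.mpr ⟨alphaInv hX'X hρT₁ sec hsec hρI,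
    LinearMap.congr_fun (alphaInv_comp_alpha hX'X hρT₁ sec hsec hρI hρT₂),
    LinearMap.congr_fun (alpha_comp_alphaInv hX'X hρT₁ sec hsec hρI hρT₂)⟩

end Alpha

theorem stmt9_general {𝕜 : Type*} [CommRing 𝕜]
    {G H K : Type*} [Group G] [Group H] [Group K]
    (X' X : Subgroup (G × H)) (hX'X : X' ≤ X) (Y : Subgroup (H × K))
    {M' N : Type*} [AddCommGroup M'] [Module 𝕜 M'] [AddCommGroup N] [Module 𝕜 N]
    (ρM' : Representation 𝕜 ↥X' M') (ρN : Representation 𝕜 ↥Y N)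
    -- the `𝕜[X'*Y]`-module structure on `M' ⊗^{X',Y}_{𝕜H} N`
    (ρT₁ : Representation 𝕜 ↥(comp X' Y) (ExtTen X' Y ρM' ρN))
    (hρT₁ : ∀ (g : G) (k : K) (hgk : (g, k) ∈ comp X' Y) (h : H)
      (h1 : (g, h) ∈ X') (h2 : (h, k) ∈ Y) (m : M') (n : N),
      ρT₁ ⟨(g, k), hgk⟩ (extMk X' Y ρM' ρN (m ⊗ₜ[𝕜] n)) =
        extMk X' Y ρM' ρN ((ρM' ⟨(g, h), h1⟩ m) ⊗ₜ[𝕜] (ρN ⟨(h, k), h2⟩ n)))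
    -- the `𝕜[X*Y]`-module structure on `Ind_{X'*Y}^{X*Y}(M' ⊗^{X',Y} N)`
    (ρS : Representation 𝕜 ↥(comp X Y) (Ind (comp X' Y) (comp X Y) ρT₁))
    (hρS : ∀ (x b : ↥(comp X Y)) (t : ExtTen X' Y ρM' ρN),
      ρS x (indMk (comp X' Y) (comp X Y) ρT₁ ((MonoidAlgebra.single b (1 : 𝕜)) ⊗ₜ[𝕜] t)) =
        indMk (comp X' Y) (comp X Y) ρT₁ ((MonoidAlgebra.single (x * b) (1 : 𝕜)) ⊗ₜ[𝕜] t))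
    -- the `𝕜X`-module structure on `Ind_{X'}^{X}(M')`
    (ρI : Representation 𝕜 ↥X (Ind X' X ρM'))
    (hρI : ∀ (x b : ↥X) (m : M'),
      ρI x (indMk X' X ρM' ((MonoidAlgebra.single b (1 : 𝕜)) ⊗ₜ[𝕜] m)) =
        indMk X' X ρM' ((MonoidAlgebra.single (x * b) (1 : 𝕜)) ⊗ₜ[𝕜] m))
    -- the `𝕜[X*Y]`-module structure on `Ind_{X'}^{X}(M') ⊗^{X,Y}_{𝕜H} N`
    (ρT₂ : Representation 𝕜 ↥(comp X Y) (ExtTen X Y ρI ρN))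
    (hρT₂ : ∀ (g : G) (k : K) (hgk : (g, k) ∈ comp X Y) (h : H)
      (h1 : (g, h) ∈ X) (h2 : (h, k) ∈ Y) (u : Ind X' X ρM') (n : N),
      ρT₂ ⟨(g, k), hgk⟩ (extMk X Y ρI ρN (u ⊗ₜ[𝕜] n)) =
        extMk X Y ρI ρN ((ρI ⟨(g, h), h1⟩ u) ⊗ₜ[𝕜] (ρN ⟨(h, k), h2⟩ n))) :
    ∃ α : Ind (comp X' Y) (comp X Y) ρT₁ →ₗ[𝕜] ExtTen X Y ρI ρN,
      (∀ (g : G) (k : K) (hgk : (g, k) ∈ comp X Y) (h : H)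
        (h1 : (g, h) ∈ X) (h2 : (h, k) ∈ Y) (m : M') (n : N),
        α (indMk (comp X' Y) (comp X Y) ρT₁
            ((MonoidAlgebra.single (⟨(g, k), hgk⟩ : ↥(comp X Y)) (1 : 𝕜)) ⊗ₜ[𝕜]
              (extMk X' Y ρM' ρN (m ⊗ₜ[𝕜] n)))) =
          extMk X Y ρI ρN
            ((indMk X' X ρM' ((MonoidAlgebra.single (⟨(g, h), h1⟩ : ↥X) (1 : 𝕜)) ⊗ₜ[𝕜] m))
              ⊗ₜ[𝕜] (ρN ⟨(h, k), h2⟩ n))) ∧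
      (∀ (x : ↥(comp X Y)) (u : Ind (comp X' Y) (comp X Y) ρT₁),
        α (ρS x u) = ρT₂ x (α u)) ∧
      (p2 X ≤ p1 Y → Function.Bijective α) := by
  exact ⟨alpha hX'X hρT₁ hρI hρT₂, alpha_single hX'X hρT₁ hρI hρT₂,
    alpha_rep hX'X hρT₁ hρI hρT₂ hρS, alpha_bijective hX'X hρT₁ hρI hρT₂⟩

/-- There is a natural `𝕜[X*Y]`-module homomorphism
`α₁ : Ind_{X'*Y}^{X*Y}(M' ⊗^{X',Y}_{𝕜H} N) → Ind_{X'}^{X}(M') ⊗^{X,Y}_{𝕜H} N`,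
`(g,k)⊗(m'⊗n) ↦ ((g,h)⊗m') ⊗ (h,k)n`, and if `p₂(X) ≤ p₁(Y)` then `α₁` is an
isomorphism. -/
theorem stmt9 {𝕜 : Type*} [CommRing 𝕜]
    {G H K : Type*} [Group G] [Group H] [Group K] [Finite G] [Finite H] [Finite K]
    (X' X : Subgroup (G × H)) (hX'X : X' ≤ X) (Y : Subgroup (H × K))
    {M' N : Type*} [AddCommGroup M'] [Module 𝕜 M'] [AddCommGroup N] [Module 𝕜 N]
    (ρM' : Representation 𝕜 ↥X' M') (ρN : Representation 𝕜 ↥Y N)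
    -- the `𝕜[X'*Y]`-module structure on `M' ⊗^{X',Y}_{𝕜H} N`
    (ρT₁ : Representation 𝕜 ↥(comp X' Y) (ExtTen X' Y ρM' ρN))
    (hρT₁ : ∀ (g : G) (k : K) (hgk : (g, k) ∈ comp X' Y) (h : H)
      (h1 : (g, h) ∈ X') (h2 : (h, k) ∈ Y) (m : M') (n : N),
      ρT₁ ⟨(g, k), hgk⟩ (extMk X' Y ρM' ρN (m ⊗ₜ[𝕜] n)) =
        extMk X' Y ρM' ρN ((ρM' ⟨(g, h), h1⟩ m) ⊗ₜ[𝕜] (ρN ⟨(h, k), h2⟩ n)))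
    -- the `𝕜[X*Y]`-module structure on `Ind_{X'*Y}^{X*Y}(M' ⊗^{X',Y} N)`
    (ρS : Representation 𝕜 ↥(comp X Y) (Ind (comp X' Y) (comp X Y) ρT₁))
    (hρS : ∀ (x b : ↥(comp X Y)) (t : ExtTen X' Y ρM' ρN),
      ρS x (indMk (comp X' Y) (comp X Y) ρT₁ ((MonoidAlgebra.single b (1 : 𝕜)) ⊗ₜ[𝕜] t)) =
        indMk (comp X' Y) (comp X Y) ρT₁ ((MonoidAlgebra.single (x * b) (1 : 𝕜)) ⊗ₜ[𝕜] t))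
    -- the `𝕜X`-module structure on `Ind_{X'}^{X}(M')`
    (ρI : Representation 𝕜 ↥X (Ind X' X ρM'))
    (hρI : ∀ (x b : ↥X) (m : M'),
      ρI x (indMk X' X ρM' ((MonoidAlgebra.single b (1 : 𝕜)) ⊗ₜ[𝕜] m)) =
        indMk X' X ρM' ((MonoidAlgebra.single (x * b) (1 : 𝕜)) ⊗ₜ[𝕜] m))
    -- the `𝕜[X*Y]`-module structure on `Ind_{X'}^{X}(M') ⊗^{X,Y}_{𝕜H} N`
    (ρT₂ : Representation 𝕜 ↥(comp X Y) (ExtTen X Y ρI ρN))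
    (hρT₂ : ∀ (g : G) (k : K) (hgk : (g, k) ∈ comp X Y) (h : H)
      (h1 : (g, h) ∈ X) (h2 : (h, k) ∈ Y) (u : Ind X' X ρM') (n : N),
      ρT₂ ⟨(g, k), hgk⟩ (extMk X Y ρI ρN (u ⊗ₜ[𝕜] n)) =
        extMk X Y ρI ρN ((ρI ⟨(g, h), h1⟩ u) ⊗ₜ[𝕜] (ρN ⟨(h, k), h2⟩ n))) :
    ∃ α : Ind (comp X' Y) (comp X Y) ρT₁ →ₗ[𝕜] ExtTen X Y ρI ρN,
      (∀ (g : G) (k : K) (hgk : (g, k) ∈ comp X Y) (h : H)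
        (h1 : (g, h) ∈ X) (h2 : (h, k) ∈ Y) (m : M') (n : N),
        α (indMk (comp X' Y) (comp X Y) ρT₁
            ((MonoidAlgebra.single (⟨(g, k), hgk⟩ : ↥(comp X Y)) (1 : 𝕜)) ⊗ₜ[𝕜]
              (extMk X' Y ρM' ρN (m ⊗ₜ[𝕜] n)))) =
          extMk X Y ρI ρN
            ((indMk X' X ρM' ((MonoidAlgebra.single (⟨(g, h), h1⟩ : ↥X) (1 : 𝕜)) ⊗ₜ[𝕜] m))
              ⊗ₜ[𝕜] (ρN ⟨(h, k), h2⟩ n))) ∧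
      (∀ (x : ↥(comp X Y)) (u : Ind (comp X' Y) (comp X Y) ρT₁),
        α (ρS x u) = ρT₂ x (α u)) ∧
      (p2 X ≤ p1 Y → Function.Bijective α) :=
  stmt9_general X' X hX'X Y ρM' ρN ρT₁ hρT₁ ρS hρS ρI hρI ρT₂ hρT₂

end Stmt9
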